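/- arXiv:2112.06332 — 7 statements merged into one kernel-verified Lean document; each statement's English description precedes it below -/
import Mathlib

section
/- Let K be an algebraically closed field and let M̃ = {(0,β) : β ∈ K, β ≠ 0} ∪ {(α,0) : α ∈ K, α ≠ 0} ∪ {(α,β) ∈ K × K : αβ = −1}. Then M̃ is exactly one 𝒩-equivalence class: a point (α,β) ∈ K × K belongs to M̃ if and only if it is 𝒩-equivalent to the point (0,1). -/
/-!
Every step either keeps the product `t = αβ` or replaces it by `-(1 + t)`, so `t (1 + t)` is
invariant; no step moves a point onto or off the origin. Hence the class of `(0, 1)` lies in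
`{p ≠ 0, t (1 + t) = 0}`, which is `M̃`. Conversely, the second and fourth steps send the points
of `M̃` with `αβ = -1` resp. `β = 0` to the axis `α = 0`, and on that axis the scaling step
reaches `(0, 1)` because every element of `K` is a square.
-/

/-- The step relation generating the partial action of the group `𝒩` on `K × K`. -/
def Rstep {K : Type*} [Field K] (p q : K × K) : Prop :=
  (∃ s : K, s ≠ 0 ∧ q = (s ^ 2 * p.1, s⁻¹ ^ 2 * p.2)) ∨
  (p.2 ≠ 0 ∧ q = (p.2⁻¹ * (1 + p.1 * p.2), -p.2)) ∨
  (p.1 ≠ 0 ∧ q = (-p.1⁻¹, p.1 * (1 + p.1 * p.2))) ∨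
  (1 + p.1 * p.2 ≠ 0 ∧ q = (-p.2 * (1 + p.1 * p.2)⁻¹, -p.1 * (1 + p.1 * p.2)))

theorem Relation.EqvGen.apply_eq_of_rel {α β : Type*} {r : α → α → Prop} {f : α → β}
    (hf : ∀ a b, r a b → f a = f b) {a b : α} (h : Relation.EqvGen r a b) : f a = f b :=
  congrArg (Quot.lift f hf) (Quot.eqvGen_sound h)

namespace Rstep

variable {K : Type*} [Field K] {p q : K × K}

theorem mul_eq (h : Rstep p q) :
    q.1 * q.2 = p.1 * p.2 ∨ q.1 * q.2 = -(1 + p.1 * p.2) := by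
  obtain ⟨α, β⟩ := p
  rcases h with ⟨s, hs, rfl⟩ | ⟨hβ, rfl⟩ | ⟨hα, rfl⟩ | ⟨ht, rfl⟩
  · left; field_simp
  · right; field_simp
  · right; field_simp
  · dsimp only at ht
    left; rw [mul_comm α β] at ht ⊢; field_simp

theorem mul_mul_one_add_mul_eq (h : Rstep p q) :
    q.1 * q.2 * (1 + q.1 * q.2) = p.1 * p.2 * (1 + p.1 * p.2) := by
  rcases h.mul_eq with ht | ht
  · rw [ht]
  · rw [ht]; ring

theorem eq_zero_iff (h : Rstep p q) : q = 0 ↔ p = 0 := by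
  obtain ⟨α, β⟩ := p
  rcases h with ⟨s, hs, rfl⟩ | ⟨hβ, rfl⟩ | ⟨hα, rfl⟩ | ⟨ht, rfl⟩ <;>
    simp_all [Prod.ext_iff, and_comm]

end Rstep

theorem mem_tildeM_iff {K : Type*} [Field K] (p : K × K) :
    p ∈ ({q : K × K | q.1 = 0 ∧ q.2 ≠ 0} ∪ {q : K × K | q.2 = 0 ∧ q.1 ≠ 0} ∪
        {q : K × K | q.1 * q.2 = -1}) ↔ p ≠ 0 ∧ p.1 * p.2 * (1 + p.1 * p.2) = 0 := by
  obtain ⟨α, β⟩ := p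
  simp only [Set.mem_union, Set.mem_ofPred_eq, ne_eq, Prod.ext_iff, Prod.fst_zero, Prod.snd_zero,
    mul_eq_zero, add_eq_zero_iff_eq_neg']
  constructor
  · rintro ((⟨rfl, hβ⟩ | ⟨rfl, hα⟩) | ht)
    · simp [hβ]
    · simp [hα]
    · exact ⟨fun ⟨hα, _⟩ => by simp [hα] at ht, Or.inr ht⟩
  · rintro ⟨h0, (hα | hβ) | ht⟩
    · exact Or.inl (Or.inl ⟨hα, fun hβ => h0 ⟨hα, hβ⟩⟩)
    · exact Or.inl (Or.inr ⟨hβ, fun hα => h0 ⟨hα, hβ⟩⟩)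
    · exact Or.inr ht

theorem eqvGen_rstep_zero_one_of_ne_zero {K : Type*} [Field K] [IsAlgClosed K] {β : K}
    (hβ : β ≠ 0) : Relation.EqvGen Rstep ((0 : K), β) ((0 : K), (1 : K)) := by
  obtain ⟨s, rfl⟩ := IsAlgClosed.exists_pow_nat_eq β two_pos
  refine .rel _ _ (Or.inl ⟨s, fun hs => hβ (by simp [hs]), ?_⟩)
  simp [pow_ne_zero_iff two_ne_zero |>.mp hβ]

/-- The set `M̃ = M₀₁ ∪ M₁₀ ∪ M₋₁` is exactly the 𝒩-equivalence class of `(0,1)`. -/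
theorem tildeM_is_one_orbit {K : Type*} [Field K] [IsAlgClosed K] (p : K × K) :
    p ∈ ({q : K × K | q.1 = 0 ∧ q.2 ≠ 0} ∪ {q : K × K | q.2 = 0 ∧ q.1 ≠ 0} ∪
        {q : K × K | q.1 * q.2 = -1}) ↔
      Relation.EqvGen Rstep p ((0 : K), (1 : K)) := by
  obtain ⟨α, β⟩ := p
  constructor
  · rintro ((⟨rfl, hβ⟩ | ⟨rfl, hα⟩) | ht)
    · exact eqvGen_rstep_zero_one_of_ne_zero hβ
    · have hstep : Rstep (α, (0 : K)) (0, -α) := Or.inr (Or.inr (Or.inr (by simp)))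
      exact .trans _ _ _ (.rel _ _ hstep) (eqvGen_rstep_zero_one_of_ne_zero (neg_ne_zero.2 hα))
    · replace ht : α * β = -1 := ht
      have hβ : β ≠ 0 := by rintro rfl; simp at ht
      have hstep : Rstep (α, β) (0, -β) := Or.inr (Or.inl ⟨hβ, by simp [ht]⟩)
      exact .trans _ _ _ (.rel _ _ hstep) (eqvGen_rstep_zero_one_of_ne_zero (neg_ne_zero.2 hβ))
  · intro h
    have h0 : (α, β) = 0 ↔ ((0 : K), (1 : K)) = 0 :=
      .of_eq (h.apply_eq_of_rel fun _ _ hpq => propext hpq.eq_zero_iff.symm)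
    have ht := h.apply_eq_of_rel (f := fun p => p.1 * p.2 * (1 + p.1 * p.2))
      fun _ _ hpq => hpq.mul_mul_one_add_mul_eq.symm
    rw [mem_tildeM_iff]
    exact ⟨by simpa using h0, by simpa using ht⟩
end

section
/- Let K be an algebraically closed field and let M = {(α,β) ∈ K × K : α ≠ 0, β ≠ 0, αβ ≠ −1}. Then every point (α',β') ∈ M is 𝒩-equivalent to a point of the form (α, 1) with α ≠ 0 and α ≠ −1. -/
theorem Rstep.scale {K : Type*} [Field K] (p : K × K) {s : K} (hs : s ≠ 0) :
    Rstep p (s ^ 2 * p.1, s⁻¹ ^ 2 * p.2) :=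
  Or.inl ⟨s, hs, rfl⟩

theorem Rstep.scale_to_one {K : Type*} [Field K] (p : K × K) {s : K} (hs : s ^ 2 = p.2)
    (h2 : p.2 ≠ 0) : Rstep p (p.1 * p.2, 1) := by
  have hs0 : s ≠ 0 := by
    rintro rfl
    exact h2 (by simpa using hs.symm)
  convert Rstep.scale p hs0 using 2
  · rw [hs, mul_comm]
  · rw [← hs, inv_pow, inv_mul_cancel₀ (pow_ne_zero 2 hs0)]

/-- Every point of `M = {(α,β) : α ≠ 0, β ≠ 0, αβ ≠ -1}` is 𝒩-equivalent to a point
`(α, 1)` with `α ≠ 0, -1`. -/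
theorem exists_rep_in_M1 {K : Type*} [Field K] [IsAlgClosed K]
    (p : K × K) (h1 : p.1 ≠ 0) (h2 : p.2 ≠ 0) (h3 : p.1 * p.2 ≠ -1) :
    ∃ α : K, α ≠ 0 ∧ α ≠ -1 ∧ Relation.EqvGen Rstep p (α, (1 : K)) := by
  obtain ⟨s, hs⟩ := IsAlgClosed.exists_pow_nat_eq p.2 two_pos
  exact ⟨p.1 * p.2, mul_ne_zero h1 h2, h3, .rel _ _ (Rstep.scale_to_one p hs h2)⟩
end

section
/- Let K be an algebraically closed field and let α, α' ∈ K with α ∉ {0, −1} and α' ∉ {0, −1}. Then the points (α, 1) and (α', 1) of K × K are 𝒩-equivalent if and only if α' = α or α' = −1 − α. -/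
namespace Rstep

variable {K : Type*} [Field K]

def invariant (p : K × K) : K := p.1 * p.2 * (1 + p.1 * p.2)

theorem invariant_eq {p q : K × K} (h : Rstep p q) : invariant q = invariant p := by
  unfold invariant
  obtain ⟨s, hs, rfl⟩ | ⟨hb, rfl⟩ | ⟨ha, rfl⟩ | ⟨hd, rfl⟩ := h
  · field_simp
  · field_simp; ring
  · field_simp; ring
  · have hprod : -p.2 * (1 + p.1 * p.2)⁻¹ * (-p.1 * (1 + p.1 * p.2)) = p.1 * p.2 := by
      rw [mul_mul_mul_comm, inv_mul_cancel₀ hd, mul_one, neg_mul_neg, mul_comm]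
    rw [hprod]

theorem invariant_eq_of_eqvGen {p q : K × K} (h : Relation.EqvGen Rstep p q) :
    invariant p = invariant q :=
  congrArg (Quot.lift invariant fun _ _ hpq ↦ (invariant_eq hpq).symm) (Quot.eqvGen_sound h)

theorem eqvGen_neg_one_sub {i : K} (hi : i ^ 2 = -1) (α : K) :
    Relation.EqvGen Rstep (α, 1) (-1 - α, 1) := by
  have hi0 : i ≠ 0 := by rintro rfl; simp at hi
  have to_neg_one : Rstep (α, 1) (1 + α, -1) := Or.inr <| Or.inl ⟨one_ne_zero, by simp⟩
  have rescale : Rstep (1 + α, -1) (-1 - α, 1) :=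
    Or.inl ⟨i, hi0, by rw [inv_pow, hi]; ext <;> simp; ring⟩
  exact (Relation.EqvGen.rel _ _ to_neg_one).trans _ _ _ (Relation.EqvGen.rel _ _ rescale)

end Rstep

theorem M1_points_equivalent_iff_general {K : Type*} [Field K] [IsAlgClosed K]
    (α α' : K) :
    Relation.EqvGen Rstep (α, (1 : K)) (α', (1 : K)) ↔ α' = α ∨ α' = -1 - α := by
  constructor
  · intro h
    have hinv := Rstep.invariant_eq_of_eqvGen h
    simp only [Rstep.invariant, mul_one] at hinv
    have hfac : (α' - α) * (α' - (-1 - α)) = 0 := by linear_combination -hinv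
    exact (mul_eq_zero.mp hfac).imp sub_eq_zero.mp sub_eq_zero.mp
  · rintro (rfl | rfl)
    · exact Relation.EqvGen.refl _
    · obtain ⟨i, hi⟩ := IsAlgClosed.exists_pow_nat_eq (-1 : K) two_pos
      exact Rstep.eqvGen_neg_one_sub hi α

/-- Two points `(α,1)`, `(α',1)` with `α, α' ∉ {0,-1}` are 𝒩-equivalent iff
`α' = α` or `α' = -1 - α`. -/
theorem M1_points_equivalent_iff {K : Type*} [Field K] [IsAlgClosed K]
    (α α' : K) (hα0 : α ≠ 0) (hα1 : α ≠ -1) (hα'0 : α' ≠ 0) (hα'1 : α' ≠ -1) :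
    Relation.EqvGen Rstep (α, (1 : K)) (α', (1 : K)) ↔ α' = α ∨ α' = -1 - α :=
  M1_points_equivalent_iff_general α α'
end

section
/- Let K be an algebraically closed field, let K_♭ ⊆ K be a ♭-section, and let Ω = {(α, 1) : α ∈ K_♭} ∪ {(0,0)} ⊆ K × K. Then every point of K × K is 𝒩-equivalent to exactly one point of Ω. -/
/-- A ♭-section of `K`: `0 ∈ S`, for each `α` at least one of `α, -1-α` lies in `S`,
and if both lie in `S` then `α = -1-α`. -/
def IsFlatSection {K : Type*} [Field K] (S : Set K) : Prop :=
  (0 : K) ∈ S ∧ (∀ α : K, α ∈ S ∨ (-1 - α) ∈ S) ∧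
    (∀ α : K, α ∈ S → (-1 - α) ∈ S → α = -1 - α)


open Relation

lemma mul_one_add_self_eq_iff {R : Type*} [CommRing R] [NoZeroDivisors R] {a b : R} :
    a * (1 + a) = b * (1 + b) ↔ b = a ∨ b = -1 - a := by
  have key : b * (1 + b) - a * (1 + a) = (b - a) * (b - (-1 - a)) := by ring
  rw [eq_comm, ← sub_eq_zero, key, mul_eq_zero, sub_eq_zero, sub_eq_zero]

lemma Relation.EqvGen.apply_eq {α β : Type*} {r : α → α → Prop} {f : α → β}
    (hf : ∀ a b, r a b → f a = f b) {a b : α} (h : EqvGen r a b) : f a = f b :=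
  congrArg (Quot.lift f hf) (Quot.eqvGen_sound h)

namespace IsFlatSection

variable {K : Type*} [Field K] {S : Set K}

lemma exists_mem_mul_one_add_eq (hS : IsFlatSection S) (t : K) :
    ∃ α ∈ S, α * (1 + α) = t * (1 + t) := by
  rcases hS.2.1 t with ht | ht
  · exact ⟨t, ht, rfl⟩
  · exact ⟨-1 - t, ht, by ring⟩

lemma eq_of_mul_one_add_eq (hS : IsFlatSection S) {α β : K} (hα : α ∈ S) (hβ : β ∈ S)
    (h : α * (1 + α) = β * (1 + β)) : α = β := by
  rcases mul_one_add_self_eq_iff.mp h with rfl | rfl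
  · rfl
  · exact hS.2.2 α hα hβ

end IsFlatSection

section Field

variable {K : Type*} [Field K]

def orbitInvariant (p : K × K) : K := p.1 * p.2 * (1 + p.1 * p.2)

lemma Rstep.eq_zero_iff_s8 {p q : K × K} (h : Rstep p q) : p = 0 ↔ q = 0 := by
  obtain ⟨s, hs, rfl⟩ | ⟨hb, rfl⟩ | ⟨ha, rfl⟩ | ⟨hu, rfl⟩ := h
  · simp [Prod.ext_iff, hs]
  · simp [Prod.ext_iff, hb]
  · simp [Prod.ext_iff, ha]
  · simp [Prod.ext_iff, hu, and_comm]

lemma Rstep.orbitInvariant_eq {p q : K × K} (h : Rstep p q) :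
    orbitInvariant p = orbitInvariant q := by
  rcases h with ⟨s, hs, rfl⟩ | ⟨hb, rfl⟩ | ⟨ha, rfl⟩ | ⟨hu, rfl⟩ <;>
    simp only [orbitInvariant] <;> field_simp <;> ring

lemma rstep_mul_one [IsAlgClosed K] (p : K × K) (hb : p.2 ≠ 0) : Rstep p (p.1 * p.2, 1) := by
  obtain ⟨s, hs⟩ := IsAlgClosed.exists_pow_nat_eq p.2 two_pos
  have hs0 : s ≠ 0 := by rintro rfl; simp_all
  exact Or.inl ⟨s, hs0, by rw [inv_pow, hs, inv_mul_cancel₀ hb, mul_comm]⟩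

lemma eqvGen_mul_one [IsAlgClosed K] (p : K × K) (hp : p ≠ 0) :
    EqvGen Rstep p (p.1 * p.2, 1) := by
  obtain ⟨a, b⟩ := p
  by_cases hb : b = 0
  · subst hb
    have ha : a ≠ 0 := by rintro rfl; exact hp rfl
    have h₁ : Rstep (a, 0) (0, -a) := Or.inr (Or.inr (Or.inr ⟨by simp, by simp⟩))
    have h₂ : Rstep (0, -a) (0, 1) := by simpa using rstep_mul_one (0, -a) (neg_ne_zero.mpr ha)
    simpa using (EqvGen.rel _ _ h₁).trans _ _ _ (EqvGen.rel _ _ h₂)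
  · exact EqvGen.rel _ _ (rstep_mul_one (a, b) hb)

lemma eqvGen_neg_one_sub [IsAlgClosed K] (t : K) : EqvGen Rstep (t, 1) (-1 - t, 1) := by
  have h₁ : Rstep (t, 1) (1 + t, -1) := Or.inr (Or.inl ⟨one_ne_zero, by simp [add_comm]⟩)
  have h₂ : Rstep (1 + t, -1) (-1 - t, 1) := by
    convert rstep_mul_one (1 + t, -1) (by simp) using 2; ring
  exact (EqvGen.rel _ _ h₁).trans _ _ _ (EqvGen.rel _ _ h₂)

theorem eqvGen_rstep_iff [IsAlgClosed K] {p q : K × K} :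
    EqvGen Rstep p q ↔ (p = 0 ↔ q = 0) ∧ orbitInvariant p = orbitInvariant q := by
  refine ⟨fun h => ⟨?_, h.apply_eq fun _ _ => Rstep.orbitInvariant_eq⟩, ?_⟩
  · simpa using h.apply_eq (f := fun p => p = 0) fun _ _ h => propext h.eq_zero_iff_s8
  rintro ⟨h0, hN⟩
  by_cases hp : p = 0
  · obtain rfl := h0.mp hp
    exact hp ▸ EqvGen.refl _
  have hq : q ≠ 0 := mt h0.mpr hp
  have hpq : EqvGen Rstep (p.1 * p.2, 1) (q.1 * q.2, 1) := by
    rcases mul_one_add_self_eq_iff.mp hN with h | h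
    · rw [h]; exact EqvGen.refl _
    · rw [h]; exact eqvGen_neg_one_sub _
  exact ((eqvGen_mul_one p hp).trans _ _ _ hpq).trans _ _ _ (eqvGen_mul_one q hq).symm

end Field

/-- `Ω = {(α,1) : α ∈ K_♭} ∪ {(0,0)}` is a minimal set of representatives of the
𝒩-orbits on `K × K`. -/
theorem flatSection_reps {K : Type*} [Field K] [IsAlgClosed K]
    (S : Set K) (hS : IsFlatSection S) (p : K × K) :
    ∃! q : K × K,
      q ∈ ((fun α : K => ((α, 1) : K × K)) '' S ∪ {((0 : K), (0 : K))}) ∧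
        Relation.EqvGen Rstep p q := by
  simp_rw [eqvGen_rstep_iff]
  by_cases hp : p = 0
  · exact ⟨0, ⟨Or.inr rfl, by simp [hp]⟩, fun q ⟨_, h0, _⟩ => h0.mp hp⟩
  obtain ⟨α, hαS, hα⟩ := hS.exists_mem_mul_one_add_eq (p.1 * p.2)
  refine ⟨(α, 1), ⟨Or.inl ⟨α, hαS, rfl⟩, by simp [hp], by simp [orbitInvariant, hα]⟩, ?_⟩
  rintro q ⟨⟨β, hβS, rfl⟩ | rfl, h0, hN⟩
  · simp only [orbitInvariant, mul_one, ← hα] at hN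
    rw [hS.eq_of_mul_one_add_eq hβS hαS hN.symm]
  · exact absurd (h0.mpr rfl) hp
end

section
/- Let K be an algebraically closed field, let K_♭ ⊆ K be a ♭-section, let N ≤ SL₂(K) be the subgroup of monomial matrices, and for α ∈ K let g_α = [[1, α],[1, 1+α]] ∈ SL₂(K). Then for every A ∈ SL₂(K) exactly one of the following holds: (i) A ∈ N; (ii) there exists a unique α ∈ K_♭ such that A = n₁ * g_α * n₂ for some n₁, n₂ ∈ N. (In other words, SL₂(K) is the disjoint union of N and the pairwise distinct double cosets N g_α N, α ∈ K_♭.) -/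
open Matrix

/-- A matrix in `SL₂(K)` is monomial if it is diagonal or antidiagonal. -/
def IsMonomial {K : Type*} [Field K] (A : SpecialLinearGroup (Fin 2) K) : Prop :=
  ((A : Matrix (Fin 2) (Fin 2) K) 0 1 = 0 ∧ (A : Matrix (Fin 2) (Fin 2) K) 1 0 = 0) ∨
  ((A : Matrix (Fin 2) (Fin 2) K) 0 0 = 0 ∧ (A : Matrix (Fin 2) (Fin 2) K) 1 1 = 0)

/-- The matrix `g_α = [[1, α],[1, 1+α]] ∈ SL₂(K)`. -/
def gMat {K : Type*} [Field K] (α : K) : SpecialLinearGroup (Fin 2) K :=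
  ⟨!![1, α; 1, 1 + α], by rw [Matrix.det_fin_two_of]; ring⟩

/-!
The product of the four entries of a matrix in `SL₂(K)` is unchanged by multiplication on
either side by a monomial matrix, since such a factor only permutes and rescales rows (or
columns) by two scalars whose product is `±1`. On `g_α` it equals `α(1 + α)`, which determines
`α` up to `α ↦ -1 - α`; the ♭-section picks exactly one of the two. Conversely a non-monomial
`A = [[a, b], [c, d]]` has a column without zero entries, and after moving it to the front a
diagonal rescaling (taking a square root in `K`) turns `A` into `g_{bc}`; the Weyl element
with a square root of `-1` identifies the double cosets of `g_γ` and `g_{-1-γ}`.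
-/

open DoubleCoset
open scoped MatrixGroups

theorem DoubleCoset.notMem_doubleCoset_of_mem {G : Type*} [Group G] {H : Subgroup G} {a b : G}
    (hb : b ∈ H) (ha : a ∉ H) : b ∉ doubleCoset a H H := by
  rw [mem_doubleCoset]
  rintro ⟨x, hx, y, hy, rfl⟩
  refine ha ?_
  simpa [mul_assoc] using H.mul_mem (H.mul_mem (H.inv_mem hx) hb) (H.inv_mem hy)

theorem IsFlatSection.eq_of_mul_one_add_eq_s9 {K : Type*} [Field K] {S : Set K}
    (hS : IsFlatSection S) {α β : K} (hα : α ∈ S) (hβ : β ∈ S)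
    (h : α * (1 + α) = β * (1 + β)) : α = β := by
  have : (α - β) * (α - (-1 - β)) = 0 := by linear_combination h
  rcases mul_eq_zero.1 this with h | h
  · exact sub_eq_zero.1 h
  · rw [sub_eq_zero.1 h] at hα ⊢
    exact (hS.2.2 β hβ hα).symm

namespace Matrix.SpecialLinearGroup

variable {K : Type*} [Field K]

theorem det_fin_two_eq_one (A : SL(2, K)) : A 0 0 * A 1 1 - A 0 1 * A 1 0 = 1 := by
  rw [← det_fin_two]; exact A.det_coe

theorem mul_apply_fin_two (A B : SL(2, K)) (i j : Fin 2) :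
    (A * B) i j = A i 0 * B 0 j + A i 1 * B 1 j := by
  simp [Matrix.mul_apply, Fin.sum_univ_two]

variable (K) in
def monomialSubgroup : Subgroup SL(2, K) where
  carrier := {A | IsMonomial A}
  one_mem' := Or.inl ⟨by simp, by simp⟩
  mul_mem' := by
    rintro A B (⟨hA₁, hA₂⟩ | ⟨hA₁, hA₂⟩) (⟨hB₁, hB₂⟩ | ⟨hB₁, hB₂⟩) <;>
      simp_all [IsMonomial, mul_apply_fin_two]
  inv_mem' := by
    rintro A (⟨h₁, h₂⟩ | ⟨h₁, h₂⟩) <;> simp_all [IsMonomial, adjugate_fin_two]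

theorem mem_monomialSubgroup {A : SL(2, K)} : A ∈ monomialSubgroup K ↔ IsMonomial A := Iff.rfl

def antidiag2 (a : K) (ha : a ≠ 0) : SL(2, K) :=
  ⟨!![0, a; -a⁻¹, 0], by simp [det_fin_two_of, ha]⟩

theorem diag2_mem_monomialSubgroup (a : K) (ha : a ≠ 0) : diag2 a ha ∈ monomialSubgroup K :=
  Or.inl ⟨by simp [diag2_coe'], by simp [diag2_coe']⟩

theorem antidiag2_mem_monomialSubgroup (a : K) (ha : a ≠ 0) :
    antidiag2 a ha ∈ monomialSubgroup K :=
  Or.inr ⟨by simp [antidiag2], by simp [antidiag2]⟩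

theorem gMat_notMem_monomialSubgroup (α : K) : gMat α ∉ monomialSubgroup K := by
  rintro (⟨-, h⟩ | ⟨h, -⟩) <;> simp [gMat] at h

theorem mem_doubleCoset_gMat_iff {A : SL(2, K)} {α : K} :
    A ∈ doubleCoset (gMat α) (monomialSubgroup K) (monomialSubgroup K) ↔
      ∃ n₁ n₂ : SL(2, K), IsMonomial n₁ ∧ IsMonomial n₂ ∧ A = n₁ * gMat α * n₂ := by
  simp only [mem_doubleCoset, SetLike.mem_coe, mem_monomialSubgroup, exists_and_left]

def entryProd (A : SL(2, K)) : K := A 0 0 * A 0 1 * A 1 0 * A 1 1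

theorem entryProd_monomial_mul {n : SL(2, K)} (hn : n ∈ monomialSubgroup K) (A : SL(2, K)) :
    entryProd (n * A) = entryProd A := by
  have hdet := det_fin_two_eq_one n
  rcases hn with ⟨h₁, h₂⟩ | ⟨h₁, h₂⟩ <;>
    simp only [entryProd, mul_apply_fin_two, h₁, h₂] at hdet ⊢
  · linear_combination (n 0 0 * n 1 1 + 1) * (A 0 0 * A 0 1 * A 1 0 * A 1 1) * hdet
  · linear_combination (1 - n 0 1 * n 1 0) * (A 0 0 * A 0 1 * A 1 0 * A 1 1) * hdet

theorem entryProd_mul_monomial {n : SL(2, K)} (hn : n ∈ monomialSubgroup K) (A : SL(2, K)) :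
    entryProd (A * n) = entryProd A := by
  have hdet := det_fin_two_eq_one n
  rcases hn with ⟨h₁, h₂⟩ | ⟨h₁, h₂⟩ <;>
    simp only [entryProd, mul_apply_fin_two, h₁, h₂] at hdet ⊢
  · linear_combination (n 0 0 * n 1 1 + 1) * (A 0 0 * A 0 1 * A 1 0 * A 1 1) * hdet
  · linear_combination (1 - n 0 1 * n 1 0) * (A 0 0 * A 0 1 * A 1 0 * A 1 1) * hdet

theorem entryProd_eq_of_mem_doubleCoset {A B : SL(2, K)}
    (h : A ∈ doubleCoset B (monomialSubgroup K) (monomialSubgroup K)) :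
    entryProd A = entryProd B := by
  obtain ⟨n₁, hn₁, n₂, hn₂, rfl⟩ := mem_doubleCoset.1 h
  rw [entryProd_mul_monomial hn₂, entryProd_monomial_mul hn₁]

theorem entryProd_gMat (α : K) : entryProd (gMat α) = α * (1 + α) := by
  simp [entryProd, gMat]

theorem mem_doubleCoset_gMat_of_mul_sq_eq_one {A : SL(2, K)} {t : K}
    (ht : A 0 0 * A 1 0 * t ^ 2 = 1) :
    A ∈ doubleCoset (gMat (A 0 1 * A 1 0)) (monomialSubgroup K) (monomialSubgroup K) := by
  have ha : A 0 0 ≠ 0 := by rintro h; simp [h] at ht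
  have ht₀ : t ≠ 0 := by rintro rfl; simp at ht
  have hdet := det_fin_two_eq_one A
  -- `A = diag(a t, (a t)⁻¹) * g_{bc} * diag(t⁻¹, t)`, using `a d = 1 + b c` and `a c t² = 1`
  refine mem_doubleCoset.2 ⟨_, diag2_mem_monomialSubgroup (A 0 0 * t) (mul_ne_zero ha ht₀),
    _, diag2_mem_monomialSubgroup t⁻¹ (inv_ne_zero ht₀), ?_⟩
  ext i j
  fin_cases i <;> fin_cases j <;> simp only [mul_apply_fin_two] <;> simp [diag2_coe', gMat]
  · field_simp
  · linear_combination -(A 0 1) * ht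
  · field_simp
    linear_combination ht
  · field_simp
    linear_combination hdet

theorem gMat_neg_one_sub_mem_doubleCoset {t : K} (ht : t ^ 2 = -1) (γ : K) :
    gMat (-1 - γ) ∈ doubleCoset (gMat γ) (monomialSubgroup K) (monomialSubgroup K) := by
  have ht₀ : t ≠ 0 := by rintro rfl; simp at ht
  -- `g_{-1-γ} = [[0, t], [-t⁻¹, 0]] * g_γ * diag(t⁻¹, t)`
  refine mem_doubleCoset.2 ⟨_, antidiag2_mem_monomialSubgroup t ht₀,
    _, diag2_mem_monomialSubgroup t⁻¹ (inv_ne_zero ht₀), ?_⟩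
  ext i j
  fin_cases i <;> fin_cases j <;> simp only [mul_apply_fin_two] <;>
    simp [diag2_coe', antidiag2, gMat]
  · field_simp
  · linear_combination -(1 + γ) * ht
  · field_simp
    linear_combination ht
  · field_simp
    ring

theorem col_ne_zero_of_not_isMonomial {A : SL(2, K)} (hA : ¬ IsMonomial A) :
    (A 0 0 ≠ 0 ∧ A 1 0 ≠ 0) ∨ (A 0 1 ≠ 0 ∧ A 1 1 ≠ 0) := by
  have hdet := det_fin_two_eq_one A
  by_contra! h
  apply hA
  by_cases ha : A 0 0 = 0 <;> by_cases hb : A 0 1 = 0 <;> simp_all [IsMonomial]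

theorem exists_mem_doubleCoset_gMat [IsAlgClosed K] {A : SL(2, K)} (hA : ¬ IsMonomial A) :
    ∃ β, A ∈ doubleCoset (gMat β) (monomialSubgroup K) (monomialSubgroup K) := by
  have of_col (B : SL(2, K)) (ha : B 0 0 ≠ 0) (hc : B 1 0 ≠ 0) :
      ∃ β, B ∈ doubleCoset (gMat β) (monomialSubgroup K) (monomialSubgroup K) := by
    obtain ⟨t, ht⟩ := IsAlgClosed.exists_pow_nat_eq (B 0 0 * B 1 0)⁻¹ two_pos
    refine ⟨_, mem_doubleCoset_gMat_of_mul_sq_eq_one (t := t) ?_⟩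
    rw [ht, mul_inv_cancel₀ (mul_ne_zero ha hc)]
  rcases col_ne_zero_of_not_isMonomial hA with ⟨ha, hc⟩ | ⟨hb, hd⟩
  · exact of_col A ha hc
  · set w := antidiag2 (1 : K) one_ne_zero
    obtain ⟨β, hβ⟩ := of_col (A * w)
      (by simp only [mul_apply_fin_two]; simpa [w, antidiag2] using hb)
      (by simp only [mul_apply_fin_two]; simpa [w, antidiag2] using hd)
    refine ⟨β, doubleCoset_eq_of_mem hβ ▸ mem_doubleCoset.2
      ⟨1, one_mem _, w⁻¹, inv_mem (antidiag2_mem_monomialSubgroup 1 one_ne_zero), by group⟩⟩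

end Matrix.SpecialLinearGroup

open Matrix.SpecialLinearGroup

/-- `SL₂(K)` is the disjoint union of `N` and the pairwise distinct double cosets
`N g_α N`, `α ∈ K_♭`. -/
theorem SL2_double_coset_decomposition {K : Type*} [Field K] [IsAlgClosed K]
    (S : Set K) (hS : IsFlatSection S) (A : SpecialLinearGroup (Fin 2) K) :
    Xor' (IsMonomial A)
      (∃! α : K, α ∈ S ∧ ∃ n₁ n₂ : SpecialLinearGroup (Fin 2) K,
        IsMonomial n₁ ∧ IsMonomial n₂ ∧ A = n₁ * gMat α * n₂) := by
  simp only [← mem_doubleCoset_gMat_iff]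
  by_cases hA : IsMonomial A
  · exact Or.inl ⟨hA, fun ⟨α, ⟨_, hα⟩, _⟩ =>
      notMem_doubleCoset_of_mem hA (gMat_notMem_monomialSubgroup α) hα⟩
  refine Or.inr ⟨?_, hA⟩
  obtain ⟨β, hβ⟩ := exists_mem_doubleCoset_gMat hA
  obtain ⟨t, ht⟩ := IsAlgClosed.exists_pow_nat_eq (-1 : K) two_pos
  obtain ⟨α, hαS, hα⟩ :
      ∃ α ∈ S, A ∈ doubleCoset (gMat α) (monomialSubgroup K) (monomialSubgroup K) := by
    rcases hS.2.1 β with hβS | hβS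
    · exact ⟨β, hβS, hβ⟩
    · exact ⟨-1 - β, hβS, doubleCoset_eq_of_mem (gMat_neg_one_sub_mem_doubleCoset ht β) ▸ hβ⟩
  refine ⟨α, ⟨hαS, hα⟩, fun α' ⟨hα'S, hα'⟩ => hS.eq_of_mul_one_add_eq_s9 hα'S hαS ?_⟩
  rw [← entryProd_gMat, ← entryProd_gMat, ← entryProd_eq_of_mem_doubleCoset hα,
    ← entryProd_eq_of_mem_doubleCoset hα']
end

section
/- Let K be an algebraically closed field and let s, r ∈ K with s ≠ 0, r ≠ 0, s² ≠ 1, r² ≠ 1. Set t = diag(s, s⁻¹), t' = diag(r, r⁻¹) ∈ SL₂(K), Δ = s − s⁻¹, and for α ∈ K set X_α = [[s + αΔ, −αΔ],[(1+α)Δ, s⁻¹ − αΔ]] ∈ SL₂(K). Then for all X, Y ∈ SL₂(K) such that X is SL₂(K)-conjugate to t and Y is SL₂(K)-conjugate to t', there exists A ∈ SL₂(K) with A⁻¹ Y A = t' and A⁻¹ X A belonging to the set {X_α : α ∈ K} ∪ {[[s, Δ],[0, s⁻¹]], [[s⁻¹, 0],[Δ, s]], diag(s, s⁻¹), diag(s⁻¹,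 s)}. -/
open Matrix

/-- `diag(s, s⁻¹) ∈ SL₂(K)` for `s ≠ 0`. -/
def diagSL {K : Type*} [Field K] (s : K) (hs : s ≠ 0) : SpecialLinearGroup (Fin 2) K :=
  ⟨!![s, 0; 0, s⁻¹], by rw [Matrix.det_fin_two_of]; field_simp; ring⟩

/-- `X_α = [[s + αΔ, -αΔ],[(1+α)Δ, s⁻¹ - αΔ]] ∈ SL₂(K)` where `Δ = s - s⁻¹`. -/
def Xa {K : Type*} [Field K] (s : K) (hs : s ≠ 0) (α : K) :
    SpecialLinearGroup (Fin 2) K :=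
  ⟨!![s + α * (s - s⁻¹), -(α * (s - s⁻¹));
      (1 + α) * (s - s⁻¹), s⁻¹ - α * (s - s⁻¹)], by
    rw [Matrix.det_fin_two_of]; field_simp; ring⟩

/-- `[[s, Δ],[0, s⁻¹]] ∈ SL₂(K)` where `Δ = s - s⁻¹`. -/
def upSL {K : Type*} [Field K] (s : K) (hs : s ≠ 0) : SpecialLinearGroup (Fin 2) K :=
  ⟨!![s, s - s⁻¹; 0, s⁻¹], by rw [Matrix.det_fin_two_of]; field_simp; ring⟩

/-- `[[s⁻¹, 0],[Δ, s]] ∈ SL₂(K)` where `Δ = s - s⁻¹`. -/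
def lowSL {K : Type*} [Field K] (s : K) (hs : s ≠ 0) : SpecialLinearGroup (Fin 2) K :=
  ⟨!![s⁻¹, 0; s - s⁻¹, s], by rw [Matrix.det_fin_two_of]; field_simp; ring⟩

/-- `diag(s⁻¹, s) ∈ SL₂(K)` for `s ≠ 0`. -/
def diagSL' {K : Type*} [Field K] (s : K) (hs : s ≠ 0) : SpecialLinearGroup (Fin 2) K :=
  ⟨!![s⁻¹, 0; 0, s], by rw [Matrix.det_fin_two_of]; field_simp; ring⟩

/-!
Write `Y = B t' B⁻¹` and `M = B⁻¹ X B`. The conjugations fixing `t'` include the torus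
`diag(l, l⁻¹)`, which keeps the diagonal `a, d` of `M` and multiplies its corners `b, c` by `l⁻²`
and `l²`. From `tr M = s + s⁻¹` and `det M = 1` one gets `(a - s)(a - s⁻¹) = -bc`, so when
`b ≠ 0` and `a ≠ s` a square root `l` of `b / (s - a)` turns the corners into `(s - a, a - s⁻¹)`,
which is `X_α` for `α = (a - s) / Δ`. When `b = 0` or `a = s`, the diagonal is `(s, s⁻¹)` or
`(s⁻¹, s)` and one corner vanishes, and rescaling the other to `Δ` (or leaving both zero) gives
the remaining normal forms.
-/

section

variable {K : Type*} [Field K]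

theorem coe_diagSL {l : K} (hl : l ≠ 0) :
    (diagSL l hl : Matrix (Fin 2) (Fin 2) K) = !![l, 0; 0, l⁻¹] := rfl

theorem diagSL_commute {a b : K} (ha : a ≠ 0) (hb : b ≠ 0) :
    Commute (diagSL a ha) (diagSL b hb) := by
  ext i j
  fin_cases i <;> fin_cases j <;> simp [coe_diagSL, mul_comm]

theorem Matrix.SpecialLinearGroup.trace_conj {n R : Type*} [Fintype n] [DecidableEq n]
    [CommRing R] (C N : SpecialLinearGroup n R) :
    (↑(C * N * C⁻¹) : Matrix n n R).trace = (N : Matrix n n R).trace := by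
  rw [coe_mul, coe_mul, trace_mul_cycle, ← coe_mul, inv_mul_cancel, coe_one, Matrix.one_mul]

theorem Matrix.SpecialLinearGroup.sub_mul_sub_eq_neg_mul_of_trace_eq {s : K} (hs : s ≠ 0)
    (M : SpecialLinearGroup (Fin 2) K)
    (htr : (M : Matrix (Fin 2) (Fin 2) K).trace = s + s⁻¹) :
    (M 0 0 - s) * (M 0 0 - s⁻¹) = -(M 0 1 * M 1 0) := by
  have hdet := M.det_coe
  rw [det_fin_two] at hdet
  rw [trace_fin_two] at htr
  linear_combination mul_inv_cancel₀ hs - hdet + M 0 0 * htr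

theorem inv_diagSL_mul_mul_diagSL_eq {l : K} (hl : l ≠ 0) (M R : SpecialLinearGroup (Fin 2) K)
    (htr : (M : Matrix (Fin 2) (Fin 2) K).trace = (R : Matrix (Fin 2) (Fin 2) K).trace)
    (h00 : M 0 0 = R 0 0) (h01 : M 0 1 = l ^ 2 * R 0 1) (h10 : M 1 0 * l ^ 2 = R 1 0) :
    (diagSL l hl)⁻¹ * M * diagSL l hl = R := by
  rw [trace_fin_two, trace_fin_two] at htr
  ext i j
  fin_cases i <;> fin_cases j <;>
    simp [coe_diagSL, adjugate_fin_two, mul_apply, vecMul, dotProduct] <;>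
    field_simp
  · exact h00
  · exact h01
  · linear_combination h10
  · linear_combination htr - h00

def normalForms {s : K} (hs : s ≠ 0) : Set (SpecialLinearGroup (Fin 2) K) :=
  {g | ∃ α : K, g = Xa s hs α} ∪ {upSL s hs, lowSL s hs, diagSL s hs, diagSL' s hs}

theorem trace_of_mem_normalForms {s : K} (hs : s ≠ 0) {g : SpecialLinearGroup (Fin 2) K}
    (hg : g ∈ normalForms hs) : (g : Matrix (Fin 2) (Fin 2) K).trace = s + s⁻¹ := by
  obtain ⟨α, rfl⟩ | hg := hg
  · simp [Xa, trace_fin_two]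
  · rcases hg with rfl | rfl | rfl | rfl <;>
      simp [upSL, lowSL, diagSL, diagSL', trace_fin_two] <;> ring

theorem inv_diagSL_mul_mul_diagSL_mem_normalForms {s l : K} (hs : s ≠ 0) (hl : l ≠ 0)
    {M R : SpecialLinearGroup (Fin 2) K} (hR : R ∈ normalForms hs)
    (htr : (M : Matrix (Fin 2) (Fin 2) K).trace = s + s⁻¹)
    (h00 : M 0 0 = R 0 0) (h01 : M 0 1 = l ^ 2 * R 0 1) (h10 : M 1 0 * l ^ 2 = R 1 0) :
    (diagSL l hl)⁻¹ * M * diagSL l hl ∈ normalForms hs := by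
  rwa [inv_diagSL_mul_mul_diagSL_eq hl M R (htr.trans (trace_of_mem_normalForms hs hR).symm)
    h00 h01 h10]

theorem exists_sq_eq_of_ne_zero [IsAlgClosed K] {x : K} (hx : x ≠ 0) :
    ∃ (l : K) (_ : l ≠ 0), l ^ 2 = x := by
  obtain ⟨l, rfl⟩ := IsAlgClosed.exists_pow_nat_eq x two_pos
  exact ⟨l, by rintro rfl; simp at hx, rfl⟩

theorem sub_inv_ne_zero_of_sq_ne_one {s : K} (hs : s ≠ 0) (hs2 : s ^ 2 ≠ 1) : s - s⁻¹ ≠ 0 :=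
  fun h ↦ hs2 (by field_simp at h; linear_combination h)

section NormalForm

variable [IsAlgClosed K] {s : K} (hs : s ≠ 0) (hs2 : s ^ 2 ≠ 1) (M : SpecialLinearGroup (Fin 2) K)
  (htr : (M : Matrix (Fin 2) (Fin 2) K).trace = s + s⁻¹)
include hs2 htr

theorem exists_inv_diagSL_mul_mul_diagSL_mem_normalForms_of_apply_zero_one_eq_zero
    (hb : M 0 1 = 0) :
    ∃ (l : K) (hl : l ≠ 0), (diagSL l hl)⁻¹ * M * diagSL l hl ∈ normalForms hs := by
  have ha : M 0 0 = s ∨ M 0 0 = s⁻¹ := by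
    have hquad := SpecialLinearGroup.sub_mul_sub_eq_neg_mul_of_trace_eq hs M htr
    rw [hb, zero_mul, neg_zero, mul_eq_zero, sub_eq_zero, sub_eq_zero] at hquad
    exact hquad
  rcases eq_or_ne (M 1 0) 0 with hc | hc
  · refine ⟨1, one_ne_zero, ?_⟩
    rcases ha with ha | ha
    · refine inv_diagSL_mul_mul_diagSL_mem_normalForms hs _ (R := diagSL s hs)
        (by simp [normalForms]) htr ?_ ?_ ?_ <;> simp [diagSL, ha, hb, hc]
    · refine inv_diagSL_mul_mul_diagSL_mem_normalForms hs _ (R := diagSL' s hs)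
        (by simp [normalForms]) htr ?_ ?_ ?_ <;> simp [diagSL', ha, hb, hc]
  · obtain ⟨l, hl, hl2⟩ :=
      exists_sq_eq_of_ne_zero (div_ne_zero (sub_inv_ne_zero_of_sq_ne_one hs hs2) hc)
    have hcl : M 1 0 * l ^ 2 = s - s⁻¹ := by rw [hl2, mul_div_cancel₀ _ hc]
    refine ⟨l, hl, ?_⟩
    rcases ha with ha | ha
    · refine inv_diagSL_mul_mul_diagSL_mem_normalForms hs hl (R := Xa s hs 0)
        (.inl ⟨0, rfl⟩) htr ?_ ?_ ?_ <;> simp [Xa, ha, hb, hcl]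
    · refine inv_diagSL_mul_mul_diagSL_mem_normalForms hs hl (R := lowSL s hs)
        (by simp [normalForms]) htr ?_ ?_ ?_ <;> simp [lowSL, ha, hb, hcl]

theorem exists_inv_diagSL_mul_mul_diagSL_mem_normalForms_of_apply_zero_one_ne_zero
    (hb : M 0 1 ≠ 0) :
    ∃ (l : K) (hl : l ≠ 0), (diagSL l hl)⁻¹ * M * diagSL l hl ∈ normalForms hs := by
  have hΔ := sub_inv_ne_zero_of_sq_ne_one hs hs2
  have hquad := SpecialLinearGroup.sub_mul_sub_eq_neg_mul_of_trace_eq hs M htr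
  rcases eq_or_ne (M 0 0) s with ha | ha
  · have hc : M 1 0 = 0 := by
      have : M 0 1 * M 1 0 = 0 := by rw [← neg_eq_zero, ← hquad, ha, sub_self, zero_mul]
      exact (mul_eq_zero.mp this).resolve_left hb
    obtain ⟨l, hl, hl2⟩ := exists_sq_eq_of_ne_zero (div_ne_zero hb hΔ)
    have hbl : M 0 1 = l ^ 2 * (s - s⁻¹) := by rw [hl2, div_mul_cancel₀ _ hΔ]
    refine ⟨l, hl, inv_diagSL_mul_mul_diagSL_mem_normalForms hs hl (R := upSL s hs)
      (by simp [normalForms]) htr ?_ ?_ ?_⟩ <;> simp [upSL, ha, hbl, hc]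
  · have hsa : s - M 0 0 ≠ 0 := sub_ne_zero.mpr (Ne.symm ha)
    obtain ⟨l, hl, hl2⟩ := exists_sq_eq_of_ne_zero (div_ne_zero hb hsa)
    have hbl : M 0 1 = l ^ 2 * (s - M 0 0) := by rw [hl2, div_mul_cancel₀ _ hsa]
    have hcl : M 1 0 * l ^ 2 = M 0 0 - s⁻¹ :=
      mul_left_cancel₀ hsa (by linear_combination hquad - M 1 0 * hbl)
    have hα : (M 0 0 - s) / (s - s⁻¹) * (s - s⁻¹) = M 0 0 - s := div_mul_cancel₀ _ hΔ
    refine ⟨l, hl, inv_diagSL_mul_mul_diagSL_mem_normalForms hs hl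
      (R := Xa s hs ((M 0 0 - s) / (s - s⁻¹))) (.inl ⟨_, rfl⟩) htr ?_ ?_ ?_⟩ <;>
      simp [Xa, add_mul, hα, hbl, hcl]

theorem exists_inv_diagSL_mul_mul_diagSL_mem_normalForms :
    ∃ (l : K) (hl : l ≠ 0), (diagSL l hl)⁻¹ * M * diagSL l hl ∈ normalForms hs := by
  rcases eq_or_ne (M 0 1) 0 with hb | hb
  · exact exists_inv_diagSL_mul_mul_diagSL_mem_normalForms_of_apply_zero_one_eq_zero hs hs2 M htr hb
  · exact exists_inv_diagSL_mul_mul_diagSL_mem_normalForms_of_apply_zero_one_ne_zero hs hs2 M htr hb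

end NormalForm

end

theorem pair_conj_to_representative_general {K : Type*} [Field K] [IsAlgClosed K]
    (s r : K) (hs : s ≠ 0) (hr : r ≠ 0) (hs2 : s ^ 2 ≠ 1)
    (X Y : SpecialLinearGroup (Fin 2) K)
    (hX : ∃ A : SpecialLinearGroup (Fin 2) K, X = A * diagSL s hs * A⁻¹)
    (hY : ∃ A : SpecialLinearGroup (Fin 2) K, Y = A * diagSL r hr * A⁻¹) :
    ∃ A : SpecialLinearGroup (Fin 2) K,
      A⁻¹ * Y * A = diagSL r hr ∧
      A⁻¹ * X * A ∈
        ({g | ∃ α : K, g = Xa s hs α} ∪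
          {upSL s hs, lowSL s hs, diagSL s hs, diagSL' s hs} :
          Set (SpecialLinearGroup (Fin 2) K)) := by
  obtain ⟨B, rfl⟩ := hY
  have htr : (↑(B⁻¹ * X * B) : Matrix (Fin 2) (Fin 2) K).trace = s + s⁻¹ := by
    obtain ⟨C, rfl⟩ := hX
    rw [show B⁻¹ * (C * diagSL s hs * C⁻¹) * B = B⁻¹ * C * diagSL s hs * (B⁻¹ * C)⁻¹ by group,
      SpecialLinearGroup.trace_conj, coe_diagSL, trace_fin_two_of]
  obtain ⟨l, hl, hmem⟩ := exists_inv_diagSL_mul_mul_diagSL_mem_normalForms hs hs2 _ htr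
  set D := diagSL l hl
  refine ⟨B * D, ?_, ?_⟩
  · calc (B * D)⁻¹ * (B * diagSL r hr * B⁻¹) * (B * D) = D⁻¹ * (diagSL r hr * D) := by group
      _ = diagSL r hr := by rw [(diagSL_commute hr hl).eq, inv_mul_cancel_left]
  · rw [show (B * D)⁻¹ * X * (B * D) = D⁻¹ * (B⁻¹ * X * B) * D by group]
    exact hmem

/-- Every pair `(X, Y)` with `X ∼ t`, `Y ∼ t'` can be simultaneously conjugated so that
`Y` becomes `t'` and `X` becomes one of the listed representatives. -/
theorem pair_conj_to_representative {K : Type*} [Field K] [IsAlgClosed K]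
    (s r : K) (hs : s ≠ 0) (hr : r ≠ 0) (hs2 : s ^ 2 ≠ 1) (hr2 : r ^ 2 ≠ 1)
    (X Y : SpecialLinearGroup (Fin 2) K)
    (hX : ∃ A : SpecialLinearGroup (Fin 2) K, X = A * diagSL s hs * A⁻¹)
    (hY : ∃ A : SpecialLinearGroup (Fin 2) K, Y = A * diagSL r hr * A⁻¹) :
    ∃ A : SpecialLinearGroup (Fin 2) K,
      A⁻¹ * Y * A = diagSL r hr ∧
      A⁻¹ * X * A ∈
        ({g | ∃ α : K, g = Xa s hs α} ∪
          {upSL s hs, lowSL s hs, diagSL s hs, diagSL' s hs} :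
          Set (SpecialLinearGroup (Fin 2) K)) :=
  pair_conj_to_representative_general s r hs hr hs2 X Y hX hY
end

section
/- Let s, r ∈ ℂ with s ≠ 0, r ≠ 0, s² ≠ 1, r² ≠ 1; set t = diag(s, s⁻¹), t' = diag(r, r⁻¹) ∈ SL₂(ℂ) and Δ = s − s⁻¹. Regard pairs of matrices as elements of M₂(ℂ) × M₂(ℂ) equipped with its standard topology. Let O₀ = {(A·[[s, 0],[Δ, s⁻¹]]·A⁻¹, A·t'·A⁻¹) : A ∈ SL₂(ℂ)} and O_T = {(A·t·A⁻¹, A·t'·A⁻¹) : A ∈ SL₂(ℂ)}. Then the closure of O₀ in M₂(ℂ) × M₂(ℂ) satisfies closure(O₀) \ O₀ = O_T. -/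
open Matrix

/-- The orbit `O₀` of `([[s,0],[Δ,s⁻¹]], t')` inside `M₂(ℂ) × M₂(ℂ)`, `Δ = s - s⁻¹`. -/
def orbO0 (s r : ℂ) : Set (Matrix (Fin 2) (Fin 2) ℂ × Matrix (Fin 2) (Fin 2) ℂ) :=
  {p | ∃ A : SpecialLinearGroup (Fin 2) ℂ,
    p = ((A : Matrix (Fin 2) (Fin 2) ℂ) * !![s, 0; s - s⁻¹, s⁻¹] * ((A⁻¹ : SpecialLinearGroup (Fin 2) ℂ) : Matrix (Fin 2) (Fin 2) ℂ),
         (A : Matrix (Fin 2) (Fin 2) ℂ) * !![r, 0; 0, r⁻¹] * ((A⁻¹ : SpecialLinearGroup (Fin 2) ℂ) : Matrix (Fin 2) (Fin 2) ℂ))}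

/-- The orbit `O_T` of `(t, t')` inside `M₂(ℂ) × M₂(ℂ)`. -/
def orbT (s r : ℂ) : Set (Matrix (Fin 2) (Fin 2) ℂ × Matrix (Fin 2) (Fin 2) ℂ) :=
  {p | ∃ A : SpecialLinearGroup (Fin 2) ℂ,
    p = ((A : Matrix (Fin 2) (Fin 2) ℂ) * !![s, 0; 0, s⁻¹] * ((A⁻¹ : SpecialLinearGroup (Fin 2) ℂ) : Matrix (Fin 2) (Fin 2) ℂ),
         (A : Matrix (Fin 2) (Fin 2) ℂ) * !![r, 0; 0, r⁻¹] * ((A⁻¹ : SpecialLinearGroup (Fin 2) ℂ) : Matrix (Fin 2) (Fin 2) ℂ))}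

/-!
Conjugation by `A ∈ SL₂(ℂ)` is an algebra automorphism of `M₂(ℂ)`, so the closed
conditions `tr P = s + s⁻¹`, `tr Q = r + r⁻¹`, `det Q = 1` and `(Q - r⁻¹)(P - s) = 0`
hold on `O₀` and hence on its closure. Conversely, a pair satisfying them has `Q`
conjugate to `t'` (its eigenvalues `r ≠ r⁻¹` are distinct), and after this conjugation
the relation forces `P = [[s, 0], [c, s⁻¹]]`. The diagonal torus rescales `c` by
arbitrary nonzero squares, so the pair lies in `O₀` if `c ≠ 0` and in `O_T` if `c = 0`;
letting `c → 0` also gives `O_T ⊆ closure O₀`. Finally `O_T` misses `O₀` because the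
entries of a pair in `O_T` commute, while `[[s, 0], [Δ, s⁻¹]]` and `t'` do not.
-/

namespace Matrix.SpecialLinearGroup

variable {n R : Type*} [Fintype n] [DecidableEq n] [CommRing R]

def conjAut : SpecialLinearGroup n R →* Matrix n n R ≃ₐ[R] Matrix n n R :=
  (MulSemiringAction.toAlgAut (ConjAct (GL n R)) R (Matrix n n R)).comp
    (ConjAct.toConjAct.toMonoidHom.comp toGL)

theorem conjAut_apply (A : SpecialLinearGroup n R) (X : Matrix n n R) :
    conjAut A X = (A : Matrix n n R) * X * ((A⁻¹ : SpecialLinearGroup n R) : Matrix n n R) :=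
  rfl

theorem eq_conjAut_of_mul_eq_mul {A : SpecialLinearGroup n R} {X Y : Matrix n n R}
    (h : X * A = A * Y) : X = conjAut A Y := by
  rw [conjAut_apply, ← h, mul_assoc, ← coe_mul, mul_inv_cancel, coe_one, mul_one]

@[fun_prop]
theorem continuous_conjAut {𝕜 : Type*} [NontriviallyNormedField 𝕜] [CompleteSpace 𝕜]
    (A : SpecialLinearGroup n 𝕜) : Continuous (conjAut A) :=
  LinearMap.continuous_of_finiteDimensional (conjAut A).toLinearMap

variable {F : Type*} [Field F]

def diagonalUnit (μ : Fˣ) : SpecialLinearGroup (Fin 2) F :=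
  ⟨!![(μ : F), 0; 0, ((μ⁻¹ : Fˣ) : F)], by simp [det_fin_two]⟩

theorem conjAut_diagonalUnit_lowerTriangular (μ : Fˣ) (a c d : F) :
    conjAut (diagonalUnit μ) !![a, 0; c, d] = !![a, 0; c / (μ : F) ^ 2, d] := by
  rw [conjAut_apply, coe_inv, diagonalUnit]
  ext i j
  fin_cases i <;> fin_cases j <;> simp [adjugate_fin_two, mul_apply, Fin.sum_univ_two] <;>
    field_simp

end Matrix.SpecialLinearGroup

open Matrix.SpecialLinearGroup (conjAut diagonalUnit)

section TwoByTwo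

variable {F : Type*} [Field F]

theorem sub_inv_ne_zero {x : F} (hx : x ≠ 0) (hx2 : x ^ 2 ≠ 1) : x - x⁻¹ ≠ 0 := by
  intro h
  apply hx2
  field_simp at h
  linear_combination h

theorem sub_smul_one_mul_sub_smul_one_eq_zero {Q : Matrix (Fin 2) (Fin 2) F} {a b : F}
    (htr : Q.trace = a + b) (hdet : Q.det = a * b) : (Q - a • 1) * (Q - b • 1) = 0 := by
  rw [trace_fin_two] at htr
  rw [det_fin_two] at hdet
  ext i j
  fin_cases i <;> fin_cases j <;> simp [mul_apply, Fin.sum_univ_two, one_apply]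
  · linear_combination Q 0 0 * htr - hdet
  · linear_combination Q 0 1 * htr
  · linear_combination Q 1 0 * htr
  · linear_combination Q 1 1 * htr - hdet

theorem exists_hasEigenvector_of_mul_eq_zero {n : Type*} [Fintype n] [DecidableEq n]
    {Q K : Matrix n n F} {a : F} (hK : K ≠ 0) (h : (Q - a • 1) * K = 0) :
    ∃ u, Module.End.HasEigenvector (toLin' Q) a u := by
  obtain ⟨v, hv⟩ : ∃ v, K *ᵥ v ≠ 0 := by
    by_contra! hKv
    exact hK (toLin'.injective (LinearMap.ext fun v => by simpa using hKv v))
  refine ⟨K *ᵥ v, ?_, hv⟩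
  rw [Module.End.mem_eigenspace_iff, toLin'_apply, ← sub_eq_zero]
  simpa [sub_mulVec, ← mulVec_mulVec, smul_mulVec] using congrArg (· *ᵥ v) h

theorem exists_mul_eq_mul_diagonal_of_hasEigenvector {Q : Matrix (Fin 2) (Fin 2) F}
    {a b : F} {u x : Fin 2 → F} (hab : a ≠ b) (hu : Module.End.HasEigenvector (toLin' Q) a u)
    (hx : Module.End.HasEigenvector (toLin' Q) b x) :
    ∃ A : SpecialLinearGroup (Fin 2) F, Q * A = A * !![a, 0; 0, b] := by
  have hind : LinearIndependent F ![u, x] :=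
    Module.End.eigenvectors_linearIndependent' (toLin' Q) ![a, b]
      (by intro i j; fin_cases i <;> fin_cases j <;> simp [hab, hab.symm]) ![u, x]
      (by intro i; fin_cases i; exacts [hu, hx])
  have hdet : (of ![u, x]).det ≠ 0 :=
    ((isUnit_iff_isUnit_det _).mp (linearIndependent_rows_iff_isUnit.mp hind)).ne_zero
  refine ⟨⟨(of ![(of ![u, x]).det⁻¹ • u, x])ᵀ, ?_⟩, ?_⟩
  · calc ((of ![(of ![u, x]).det⁻¹ • u, x])ᵀ).det
        = (of ![u, x]).det⁻¹ * (of ![u, x]).det := by simp [det_fin_two]; ring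
      _ = 1 := inv_mul_cancel₀ hdet
  · have hu' (i : Fin 2) : Q i 0 * u 0 + Q i 1 * u 1 = a * u i := by
      simpa [mulVec, dotProduct, Fin.sum_univ_two] using
        congrFun (Module.End.mem_eigenspace_iff.mp hu.1) i
    have hx' (i : Fin 2) : Q i 0 * x 0 + Q i 1 * x 1 = b * x i := by
      simpa [mulVec, dotProduct, Fin.sum_univ_two] using
        congrFun (Module.End.mem_eigenspace_iff.mp hx.1) i
    ext i j
    fin_cases j <;> simp [mul_apply, Fin.sum_univ_two]
    · linear_combination (of ![u, x]).det⁻¹ * hu' i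
    · linear_combination hx' i

theorem exists_eq_conjAut_diagonal {Q : Matrix (Fin 2) (Fin 2) F} {a b : F} (hab : a ≠ b)
    (htr : Q.trace = a + b) (hdet : Q.det = a * b) :
    ∃ A : SpecialLinearGroup (Fin 2) F, Q = conjAut A !![a, 0; 0, b] := by
  have sub_smul_one_ne_zero (c d : F) (hcd : c ≠ d) (hcd' : Q.trace = c + d) :
      Q - d • 1 ≠ 0 := by
    intro h
    have := congrArg trace h
    simp only [trace_sub, hcd', trace_smul, trace_one, Fintype.card_fin, Nat.cast_ofNat,
      smul_eq_mul, trace_zero] at this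
    exact hcd (by linear_combination this)
  obtain ⟨u, hu⟩ := exists_hasEigenvector_of_mul_eq_zero (sub_smul_one_ne_zero a b hab htr)
    (sub_smul_one_mul_sub_smul_one_eq_zero htr hdet)
  obtain ⟨x, hx⟩ := exists_hasEigenvector_of_mul_eq_zero
    (sub_smul_one_ne_zero b a hab.symm (by rw [htr, add_comm]))
    (sub_smul_one_mul_sub_smul_one_eq_zero (by rw [htr, add_comm]) (by rw [hdet, mul_comm]))
  obtain ⟨A, hA⟩ := exists_mul_eq_mul_diagonal_of_hasEigenvector hab hu hx
  exact ⟨A, SpecialLinearGroup.eq_conjAut_of_mul_eq_mul hA⟩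

theorem eq_lowerTriangular_of_mul_eq_zero {P : Matrix (Fin 2) (Fin 2) F} {a b s t : F}
    (hab : a ≠ b) (h : (!![a, 0; 0, b] - b • 1) * (P - s • 1) = 0)
    (htr : P.trace = s + t) : P = !![s, 0; P 1 0, t] := by
  have h00 : P 0 0 = s := by
    simpa [mul_apply, Fin.sum_univ_two, sub_eq_zero, hab] using congrFun (congrFun h 0) 0
  have h01 : P 0 1 = 0 := by
    simpa [mul_apply, Fin.sum_univ_two, sub_eq_zero, hab] using congrFun (congrFun h 0) 1
  rw [trace_fin_two, h00] at htr
  ext i j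
  fin_cases i <;> fin_cases j <;> simp [h00, h01]
  linear_combination htr

end TwoByTwo

section Orbits

local notation "M₂" => Matrix (Fin 2) (Fin 2) ℂ

variable {s r : ℂ}

theorem mem_orbO0_iff {p : M₂ × M₂} :
    p ∈ orbO0 s r ↔ ∃ A, p = Prod.map (conjAut A) (conjAut A)
      (!![s, 0; s - s⁻¹, s⁻¹], !![r, 0; 0, r⁻¹]) :=
  Iff.rfl

theorem mem_orbT_iff {p : M₂ × M₂} :
    p ∈ orbT s r ↔ ∃ A, p = Prod.map (conjAut A) (conjAut A)
      (!![s, 0; 0, s⁻¹], !![r, 0; 0, r⁻¹]) :=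
  Iff.rfl

theorem map_conjAut_lowerTriangular_mem_orbO0 (hΔ : s - s⁻¹ ≠ 0) {c : ℂ} (hc : c ≠ 0)
    (A : SpecialLinearGroup (Fin 2) ℂ) :
    Prod.map (conjAut A) (conjAut A) (!![s, 0; c, s⁻¹], !![r, 0; 0, r⁻¹]) ∈ orbO0 s r := by
  obtain ⟨μ, hμ⟩ := IsAlgClosed.exists_pow_nat_eq ((s - s⁻¹) / c) two_pos
  have hμ0 : μ ≠ 0 := by
    rintro rfl
    exact div_ne_zero hΔ hc (by simpa using hμ.symm)
  let ν := Units.mk0 μ hμ0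
  refine mem_orbO0_iff.mpr ⟨A * diagonalUnit ν, ?_⟩
  have hN := SpecialLinearGroup.conjAut_diagonalUnit_lowerTriangular ν s (s - s⁻¹) s⁻¹
  have hD := SpecialLinearGroup.conjAut_diagonalUnit_lowerTriangular ν r 0 r⁻¹
  rw [Units.val_mk0, hμ, div_div_cancel₀ hΔ] at hN
  rw [zero_div] at hD
  simp [hN, hD]

theorem orbT_subset_closure_orbO0 (hΔ : s - s⁻¹ ≠ 0) : orbT s r ⊆ closure (orbO0 s r) := by
  intro p hp
  obtain ⟨A, rfl⟩ := mem_orbT_iff.mp hp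
  let f (c : ℂ) : M₂ × M₂ :=
    Prod.map (conjAut A) (conjAut A)
      (!![s, 0; 0, s⁻¹] + c • !![0, 0; 1, 0], !![r, 0; 0, r⁻¹])
  have hf : Continuous f := by fun_prop
  have hmaps : Set.MapsTo f {0}ᶜ (orbO0 s r) := fun c hc => by
    simpa [f] using map_conjAut_lowerTriangular_mem_orbO0 hΔ hc A
  simpa [f] using map_mem_closure hf (by simp) hmaps

theorem commute_of_mem_orbT {p : M₂ × M₂}
    (hp : p ∈ orbT s r) : Commute p.1 p.2 := by
  obtain ⟨A, rfl⟩ := mem_orbT_iff.mp hp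
  refine Commute.map ?_ (conjAut A)
  ext i j
  fin_cases i <;> fin_cases j <;> simp [mul_comm]

theorem not_commute_of_mem_orbO0 (hΔ : s - s⁻¹ ≠ 0) (hr : r ≠ r⁻¹)
    {p : M₂ × M₂} (hp : p ∈ orbO0 s r) :
    ¬Commute p.1 p.2 := by
  obtain ⟨A, rfl⟩ := mem_orbO0_iff.mp hp
  intro h
  have h10 : (s - s⁻¹) * r = r⁻¹ * (s - s⁻¹) := by
    simpa using congrFun (congrFun (h.map (conjAut A⁻¹)).eq 1) 0
  exact hr (mul_left_cancel₀ hΔ (by linear_combination h10))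

def orbO0Locus (s r : ℂ) : Set (M₂ × M₂) :=
  {p | p.1.trace = s + s⁻¹ ∧ p.2.trace = r + r⁻¹ ∧ p.2.det = 1 ∧
    (p.2 - r⁻¹ • 1) * (p.1 - s • 1) = 0}

theorem isClosed_orbO0Locus (s r : ℂ) : IsClosed (orbO0Locus s r) := by
  refine .inter (isClosed_eq (by fun_prop) (by fun_prop)) <|
    .inter (isClosed_eq (by fun_prop) (by fun_prop)) <|
    .inter (isClosed_eq (by fun_prop) (by fun_prop)) (isClosed_eq ?_ (by fun_prop))
  exact ((continuous_snd.sub continuous_const).matrix_mul (continuous_fst.sub continuous_const))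

theorem map_conjAut_mem_orbO0Locus {p : M₂ × M₂}
    (hp : p ∈ orbO0Locus s r) (A : SpecialLinearGroup (Fin 2) ℂ) :
    Prod.map (conjAut A) (conjAut A) p ∈ orbO0Locus s r := by
  obtain ⟨h1, h2, h3, h4⟩ := hp
  refine ⟨by simpa using h1, by simpa using h2, by simpa using h3, ?_⟩
  simp only [Prod.map_fst, Prod.map_snd]
  rw [← map_one (conjAut A), ← map_smul, ← map_smul, ← map_sub, ← map_sub, ← map_mul,
    h4, map_zero]

theorem orbO0_subset_orbO0Locus (hr : r ≠ 0) : orbO0 s r ⊆ orbO0Locus s r := by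
  intro p hp
  obtain ⟨A, rfl⟩ := mem_orbO0_iff.mp hp
  refine map_conjAut_mem_orbO0Locus ⟨by simp [trace_fin_two], by simp [trace_fin_two],
    by simp [det_fin_two, hr], ?_⟩ A
  ext i j
  fin_cases i <;> fin_cases j <;> simp [mul_apply, Fin.sum_univ_two]

theorem orbO0Locus_subset_union (hΔ : s - s⁻¹ ≠ 0) (hr : r ≠ 0) (hr' : r ≠ r⁻¹) :
    orbO0Locus s r ⊆ orbO0 s r ∪ orbT s r := by
  intro p hp
  obtain ⟨A, hA⟩ :=
    exists_eq_conjAut_diagonal hr' hp.2.1 (by rw [hp.2.2.1, mul_inv_cancel₀ hr])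
  set q := Prod.map (conjAut A⁻¹) (conjAut A⁻¹) p
  have hq : q ∈ orbO0Locus s r := map_conjAut_mem_orbO0Locus hp A⁻¹
  have hq2 : q.2 = !![r, 0; 0, r⁻¹] := by simp [q, hA]
  have hq1 : q.1 = !![s, 0; q.1 1 0, s⁻¹] :=
    eq_lowerTriangular_of_mul_eq_zero hr' (hq2 ▸ hq.2.2.2) hq.1
  have hpq : p = Prod.map (conjAut A) (conjAut A) (q.1, q.2) := by simp [q]
  by_cases hc : q.1 1 0 = 0
  · exact .inr (mem_orbT_iff.mpr ⟨A, by rw [hpq, hq2, hq1, hc]⟩)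
  · rw [hpq, hq2, hq1]
    exact .inl (map_conjAut_lowerTriangular_mem_orbO0 hΔ hc A)

end Orbits

/-- The closure of `O₀` in `M₂(ℂ) × M₂(ℂ)` satisfies `closure(O₀) \ O₀ = O_T`. -/
theorem closure_orbO0_diff (s r : ℂ) (hs : s ≠ 0) (hr : r ≠ 0)
    (hs2 : s ^ 2 ≠ 1) (hr2 : r ^ 2 ≠ 1) :
    closure (orbO0 s r) \ orbO0 s r = orbT s r := by
  have hΔ : s - s⁻¹ ≠ 0 := sub_inv_ne_zero hs hs2
  have hr' : r ≠ r⁻¹ := sub_ne_zero.mp (sub_inv_ne_zero hr hr2)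
  ext p
  constructor
  · rintro ⟨hp, hpO⟩
    have hpL := closure_minimal (orbO0_subset_orbO0Locus hr) (isClosed_orbO0Locus s r) hp
    exact (orbO0Locus_subset_union hΔ hr hr' hpL).resolve_left hpO
  · intro hpT
    exact ⟨orbT_subset_closure_orbO0 hΔ hpT,
      fun hpO => not_commute_of_mem_orbO0 hΔ hr' hpO (commute_of_mem_orbT hpT)⟩
end
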